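/- Let E be a finite-dimensional Hilbert space, let ν_1,…,ν_s ∈ ℕ^d be distinct multi-indices, let E_1,…,E_s ⊆ E be subspaces, and let M ⊆ H²(ℂ^d) ⊗ E be the closed invariant subspace for the d-shift generated by z^{ν_1} ⊗ E_1, …, z^{ν_s} ⊗ E_s (i.e., M is the closed span of all vectors f_1(z)z^{ν_1} ⊗ ζ_1 + ⋯ + f_s(z)z^{ν_s} ⊗ ζ_s with f_j ∈ ℂ[z_1,…,z_d] and ζ_j ∈ E_j). For n ∈ ℤ^d define the spectral subspace M(n) = {ξ ∈ M : Γ(λ)ξ = λ^n ξ for all λ ∈ 𝕋^d}, and for each k define E_k(n) = E_k if ν_k ≤ n (coordinatewise) and E_k(n) = {0} otherwise, and set E(n) = E_1(n) + ⋯ + E_s(n). Then M(n) = {0} unless n ≥ 0, and for n ≥ 0 one has M(n) = z^n ⊗ E(n) = {z^n ⊗ ζ : ζ ∈ E(n)}. -/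

import Mathlib

open scoped ENNReal

noncomputable section

set_option synthInstance.maxHeartbeats 400000
set_option maxHeartbeats 1000000

namespace Arveson

/-- `‖z^n‖²` in the Drury–Arveson space `H²(ℂ^d)`: `n₁!⋯n_d!/(n₁+⋯+n_d)!`. -/
def daWeight {d : ℕ} (n : Fin d → ℕ) : ℝ :=
  ((∏ i, (n i).factorial : ℕ) : ℝ) / (((∑ i, n i).factorial : ℕ) : ℝ)

/-- An abstract presentation of the `d`-shift `(S₁,…,S_d)` acting on `H²(ℂ^d) ⊗ E`
(the symmetric Fock space / Drury–Arveson space with coefficients in `E`).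
`mono n` sends `ζ : E` to the monomial `z^n ⊗ ζ`; the axioms say that the monomials are
mutually orthogonal with `⟪z^n ⊗ ζ, z^n ⊗ η⟫ = (n₁!⋯n_d!/(n₁+⋯+n_d)!)·⟪ζ, η⟫`, that
they span a dense subspace, and that `S_k (z^n ⊗ ζ) = z^{n+e_k} ⊗ ζ`.  These axioms
determine the `d`-shift of rank `dim E` uniquely up to unitary equivalence. -/
structure DShift (d : ℕ) (E : Type*) [NormedAddCommGroup E] [InnerProductSpace ℂ E]
    (H : Type*) [NormedAddCommGroup H] [InnerProductSpace ℂ H] where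
  mono : (Fin d → ℕ) → E →ₗ[ℂ] H
  S : Fin d → H →L[ℂ] H
  inner_mono : ∀ (n m : Fin d → ℕ) (ζ η : E),
    (inner ℂ (mono n ζ) (mono m η) : ℂ) =
      if n = m then (daWeight n : ℂ) * (inner ℂ ζ η : ℂ) else 0
  total : (Submodule.span ℂ {x : H | ∃ n ζ, x = mono n ζ}).topologicalClosure = ⊤
  shift_mono : ∀ (k : Fin d) (n : Fin d → ℕ) (ζ : E),
    S k (mono n ζ) = mono (fun i => if i = k then n i + 1 else n i) ζ

variable {d : ℕ} {E : Type*} [NormedAddCommGroup E] [InnerProductSpace ℂ E]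
  {H₀ : Type*} [NormedAddCommGroup H₀] [InnerProductSpace ℂ H₀]

/-- `M` is invariant under each of the operators `S₁,…,S_d`. -/
def IsInvariant (D : DShift d E H₀) (M : Submodule ℂ H₀) : Prop :=
  ∀ k : Fin d, ∀ x ∈ M, D.S k x ∈ M

/-- `M` is a closed invariant subspace for the `d`-shift which is generated, as a closed
invariant subspace, by a set `F` of monomials `z^n ⊗ ζ`: that is, `M` is the smallest
closed invariant subspace containing `F`. -/
def IsMonomialGenerated (D : DShift d E H₀) (M : Submodule ℂ H₀) : Prop :=
  IsClosed (M : Set H₀) ∧ IsInvariant D M ∧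
    ∃ F : Set H₀, (∀ f ∈ F, ∃ n ζ, f = D.mono n ζ) ∧ F ⊆ (M : Set H₀) ∧
      ∀ N : Submodule ℂ H₀, IsClosed (N : Set H₀) → IsInvariant D N →
        F ⊆ (N : Set H₀) → M ≤ N

/-! The gauge action multiplies `z^m ⊗ η` by `λ^m`, so a vector of `M(n)` is orthogonal to every
monomial `z^m ⊗ η` with `m ≠ n` (test against a `λ` with `λ^m ≠ λ^n`). Since the monomials are
total, it vanishes unless `n ≥ 0` and is of the form `z^n ⊗ ζ` otherwise. Because `E(·)` is
monotone, the closed span `N` of all `z^m ⊗ E(m)` is invariant and contains the generators, so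
`M ⊆ N`; pairing with `z^n ⊗ η`, `η ⊥ E(n)`, then forces `ζ ∈ E(n)`. Conversely `z^n ⊗ E(n) ⊆ M`
because `z^n ⊗ ζ` is obtained from `z^{ν_k} ⊗ ζ` by applying shifts whenever `ν_k ≤ n`. -/

open scoped InnerProductSpace

lemma daWeight_pos (n : Fin d → ℕ) : 0 < daWeight n := by
  unfold daWeight
  positivity

open Complex Real in
lemma exists_norm_eq_one_zpow_ne {a b : ℤ} (h : a ≠ b) : ∃ c : ℂ, ‖c‖ = 1 ∧ c ^ a ≠ c ^ b := by
  refine ⟨exp ((π / (a - b : ℤ) : ℝ) * I), norm_exp_ofReal_mul_I _, fun hc => ?_⟩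
  -- `c = exp (π i / (a - b))` is chosen so that `c ^ (a - b) = -1`
  have hpow : exp ((π / (a - b : ℤ) : ℝ) * I) ^ (a - b) = -1 := by
    rw [← exp_int_mul, ← exp_pi_mul_I]
    congr 1
    have hab : (a - b : ℂ) ≠ 0 := by exact_mod_cast sub_ne_zero.2 h
    push_cast
    field_simp
  rw [zpow_sub₀ (Complex.exp_ne_zero _), hc,
    div_self (zpow_ne_zero _ (Complex.exp_ne_zero _))] at hpow
  norm_num at hpow

namespace DShift

variable (D : DShift d E H₀)

lemma inner_mono_self (n : Fin d → ℕ) (η ζ : E) :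
    ⟪D.mono n η, D.mono n ζ⟫_ℂ = daWeight n * ⟪η, ζ⟫_ℂ := by
  simp [D.inner_mono]

lemma inner_mono_of_ne {m n : Fin d → ℕ} (h : m ≠ n) (η ζ : E) :
    ⟪D.mono m η, D.mono n ζ⟫_ℂ = 0 := by
  simp [D.inner_mono, h]

lemma dense_span_mono : Dense (Submodule.span ℂ {x : H₀ | ∃ n ζ, x = D.mono n ζ} : Set H₀) :=
  Submodule.dense_iff_topologicalClosure_eq_top.2 D.total

lemma continuousLinearMap_ext {F : Type*} [TopologicalSpace F] [AddCommMonoid F] [Module ℂ F]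
    [T2Space F] {f g : H₀ →L[ℂ] F} (h : ∀ n ζ, f (D.mono n ζ) = g (D.mono n ζ)) : f = g :=
  ContinuousLinearMap.ext_on D.dense_span_mono (by rintro _ ⟨n, ζ, rfl⟩; exact h n ζ)

lemma eq_zero_of_inner_mono {x : H₀} (hx : ∀ n ζ, ⟪D.mono n ζ, x⟫_ℂ = 0) : x = 0 := by
  have h : innerSL ℂ x = 0 :=
    D.continuousLinearMap_ext fun n ζ => by simp [inner_eq_zero_symm.1 (hx n ζ)]
  simpa using congr($h x)

lemma exists_eq_mono_of_inner_mono [FiniteDimensional ℂ E] {n : Fin d → ℕ} {x : H₀}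
    (hx : ∀ m ≠ n, ∀ η, ⟪D.mono m η, x⟫_ℂ = 0) : ∃ ζ, x = D.mono n ζ := by
  set φ : StrongDual ℂ E := LinearMap.toContinuousLinearMap ((innerₛₗ ℂ x).comp (D.mono n))
  refine ⟨(daWeight n : ℂ)⁻¹ • (InnerProductSpace.toDual ℂ E).symm φ,
    sub_eq_zero.1 (D.eq_zero_of_inner_mono fun m η => ?_)⟩
  rw [inner_sub_right]
  by_cases hm : m = n
  · subst hm
    have hw : (daWeight m : ℂ) ≠ 0 := by exact_mod_cast (daWeight_pos m).ne'
    rw [inner_mono_self, inner_smul_right, mul_inv_cancel_left₀ hw, ← inner_conj_symm η,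
      InnerProductSpace.toDual_symm_apply]
    simp [φ]
  · rw [hx m hm, inner_mono_of_ne D hm, sub_zero]

end DShift

lemma IsInvariant.mono_mem_of_le {D : DShift d E H₀} {M : Submodule ℂ H₀} (hM : IsInvariant D M)
    {m m' : Fin d → ℕ} (hmm' : m ≤ m') {ζ : E} (hm : D.mono m ζ ∈ M) : D.mono m' ζ ∈ M := by
  induction m' using WellFoundedLT.induction with
  | _ m' ih =>
  obtain rfl | hlt := hmm'.eq_or_lt
  · exact hm
  obtain ⟨k, hk⟩ : ∃ k, m k < m' k := (Pi.lt_def.1 hlt).2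
  set m'' := Function.update m' k (m' k - 1)
  have hS : D.mono m' ζ = D.S k (D.mono m'' ζ) := by
    rw [D.shift_mono]
    congr
    funext i
    by_cases hi : i = k
    · subst hi
      simp only [if_pos, m'', Function.update_self]
      omega
    · simp [m'', hi]
  rw [hS]
  exact hM k _ (ih m'' (update_lt_self_iff.2 (by omega))
    (le_update_iff.2 ⟨by omega, fun j _ => hmm' j⟩))

def IsGaugeAction (D : DShift d E H₀) (Γ : (Fin d → ℂ) → H₀ →L[ℂ] H₀) : Prop :=
  ∀ l : Fin d → ℂ, (∀ i, ‖l i‖ = 1) → ∀ (m : Fin d → ℕ) (ζ : E),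
    Γ l (D.mono m ζ) = (∏ i, l i ^ m i) • D.mono m ζ

def IsSpectral (Γ : (Fin d → ℂ) → H₀ →L[ℂ] H₀) (n : Fin d → ℤ) (ξ : H₀) : Prop :=
  ∀ l : Fin d → ℂ, (∀ i, ‖l i‖ = 1) → Γ l ξ = (∏ i, l i ^ n i) • ξ

section Gauge

variable {D : DShift d E H₀} {Γ : (Fin d → ℂ) → H₀ →L[ℂ] H₀}

lemma IsGaugeAction.inner_mono_apply (hΓ : IsGaugeAction D Γ) {l : Fin d → ℂ}
    (hl : ∀ i, ‖l i‖ = 1) (m : Fin d → ℕ) (η : E) (x : H₀) :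
    ⟪D.mono m η, Γ l x⟫_ℂ = (∏ i, l i ^ m i) * ⟪D.mono m η, x⟫_ℂ := by
  have h : (innerSL ℂ (D.mono m η)).comp (Γ l) = (∏ i, l i ^ m i) • innerSL ℂ (D.mono m η) := by
    refine D.continuousLinearMap_ext fun p ζ => ?_
    by_cases hp : m = p
    · subst hp
      simp [hΓ l hl]
    · simp [hΓ l hl, D.inner_mono_of_ne hp]
  simpa using congr($h x)

lemma IsGaugeAction.isSpectral_mono (hΓ : IsGaugeAction D Γ) (n : Fin d → ℕ) (ζ : E) :
    IsSpectral Γ (fun i => (n i : ℤ)) (D.mono n ζ) := fun l hl => by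
  simpa using hΓ l hl n ζ

lemma IsSpectral.inner_mono_eq_zero (hΓ : IsGaugeAction D Γ) {n : Fin d → ℤ} {ξ : H₀}
    (hξ : IsSpectral Γ n ξ) {m : Fin d → ℕ} (hmn : (fun i => (m i : ℤ)) ≠ n) (η : E) :
    ⟪D.mono m η, ξ⟫_ℂ = 0 := by
  obtain ⟨i₀, hi₀⟩ := Function.ne_iff.1 hmn
  obtain ⟨c, hc, hcne⟩ := exists_norm_eq_one_zpow_ne hi₀
  set l : Fin d → ℂ := Pi.mulSingle i₀ c
  have hl : ∀ i, ‖l i‖ = 1 := fun i => by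
    by_cases hi : i = i₀ <;> simp [l, hi, hc]
  have hprod : ∀ k : Fin d → ℤ, ∏ i, l i ^ k i = c ^ k i₀ := fun k =>
    (Finset.prod_eq_single i₀ (fun i _ hi => by simp [l, hi]) (by simp)).trans (by simp [l])
  have key := hΓ.inner_mono_apply hl m η ξ
  rw [hξ l hl, inner_smul_right] at key
  simp only [← zpow_natCast, hprod] at key
  by_contra hne
  exact hcne (mul_right_cancel₀ hne key).symm

lemma IsSpectral.eq_zero_of_not_nonneg (hΓ : IsGaugeAction D Γ) {n : Fin d → ℤ} {ξ : H₀}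
    (hξ : IsSpectral Γ n ξ) (hn : ¬ ∀ i, 0 ≤ n i) : ξ = 0 :=
  D.eq_zero_of_inner_mono fun m η =>
    hξ.inner_mono_eq_zero hΓ (fun h => hn (h ▸ fun i => by simp)) η

lemma IsSpectral.exists_eq_mono [FiniteDimensional ℂ E] (hΓ : IsGaugeAction D Γ)
    {n : Fin d → ℕ} {ξ : H₀} (hξ : IsSpectral Γ (fun i => (n i : ℤ)) ξ) :
    ∃ ζ, ξ = D.mono n ζ :=
  D.exists_eq_mono_of_inner_mono fun m hm η =>
    hξ.inner_mono_eq_zero hΓ (fun h => hm (funext fun i => by exact_mod_cast congrFun h i)) η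

end Gauge

section Generated

variable {s : ℕ}

def coeffSpace (ν : Fin s → Fin d → ℕ) (Esub : Fin s → Submodule ℂ E) (m : Fin d → ℕ) :
    Submodule ℂ E :=
  ⨆ k ∈ {k : Fin s | ν k ≤ m}, Esub k

lemma coeffSpace_mono (ν : Fin s → Fin d → ℕ) (Esub : Fin s → Submodule ℂ E) :
    Monotone (coeffSpace ν Esub) :=
  fun _ _ h => biSup_mono fun _ hk => le_trans hk h

def DShift.monomialClosure (D : DShift d E H₀) (F : (Fin d → ℕ) → Submodule ℂ E) :
    Submodule ℂ H₀ :=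
  (Submodule.span ℂ {x | ∃ m, ∃ η ∈ F m, x = D.mono m η}).topologicalClosure

lemma DShift.isInvariant_monomialClosure (D : DShift d E H₀)
    {F : (Fin d → ℕ) → Submodule ℂ E} (hF : Monotone F) :
    IsInvariant D (D.monomialClosure F) := by
  intro k x hx
  suffices D.monomialClosure F ≤ (D.monomialClosure F).comap (D.S k : H₀ →ₗ[ℂ] H₀) from this hx
  refine Submodule.topologicalClosure_minimal _ (Submodule.span_le.2 ?_)
    ((Submodule.isClosed_topologicalClosure _).preimage (D.S k).continuous)
  rintro _ ⟨m, η, hη, rfl⟩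
  rw [SetLike.mem_coe, Submodule.mem_comap, ContinuousLinearMap.coe_coe, D.shift_mono]
  refine Submodule.le_topologicalClosure _ (Submodule.subset_span ⟨_, η, hF ?_ hη, rfl⟩)
  intro i
  dsimp only
  split_ifs <;> omega

lemma DShift.mem_of_mono_mem_monomialClosure [FiniteDimensional ℂ E] (D : DShift d E H₀)
    {F : (Fin d → ℕ) → Submodule ℂ E} {n : Fin d → ℕ} {ζ : E}
    (h : D.mono n ζ ∈ D.monomialClosure F) : ζ ∈ F n := by
  rw [← (F n).orthogonal_orthogonal]
  intro η hη
  have hker : D.monomialClosure F ≤ LinearMap.ker (innerSL ℂ (D.mono n η) : H₀ →ₗ[ℂ] ℂ) := by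
    refine Submodule.topologicalClosure_minimal _ (Submodule.span_le.2 ?_)
      (ContinuousLinearMap.isClosed_ker _)
    rintro _ ⟨m, η', hη', rfl⟩
    by_cases hm : n = m
    · subst hm
      simp [D.inner_mono_self, inner_eq_zero_symm.1 (hη η' hη')]
    · simp [D.inner_mono_of_ne hm]
  have hw : (daWeight n : ℂ) ≠ 0 := by exact_mod_cast (daWeight_pos n).ne'
  simpa [D.inner_mono_self, hw, inner_eq_zero_symm] using hker h

lemma IsInvariant.mono_mem_of_mem_coeffSpace {D : DShift d E H₀} {M : Submodule ℂ H₀}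
    (hM : IsInvariant D M) {ν : Fin s → Fin d → ℕ} {Esub : Fin s → Submodule ℂ E}
    (hgen : {x : H₀ | ∃ k ζ, ζ ∈ Esub k ∧ x = D.mono (ν k) ζ} ⊆ M) {m : Fin d → ℕ} {ζ : E}
    (hζ : ζ ∈ coeffSpace ν Esub m) : D.mono m ζ ∈ M := by
  suffices coeffSpace ν Esub m ≤ M.comap (D.mono m) from this hζ
  exact iSup₂_le fun k hk η hη => hM.mono_mem_of_le hk (hgen ⟨k, η, hη, rfl⟩)

lemma le_monomialClosure_coeffSpace {D : DShift d E H₀} {M : Submodule ℂ H₀}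
    {ν : Fin s → Fin d → ℕ} {Esub : Fin s → Submodule ℂ E}
    (hmin : ∀ N : Submodule ℂ H₀, IsClosed (N : Set H₀) → IsInvariant D N →
      {x : H₀ | ∃ k ζ, ζ ∈ Esub k ∧ x = D.mono (ν k) ζ} ⊆ (N : Set H₀) → M ≤ N) :
    M ≤ D.monomialClosure (coeffSpace ν Esub) := by
  refine hmin _ (Submodule.isClosed_topologicalClosure _)
    (D.isInvariant_monomialClosure (coeffSpace_mono ν Esub)) ?_
  rintro _ ⟨k, ζ, hζ, rfl⟩
  exact Submodule.le_topologicalClosure _ (Submodule.subset_span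
    ⟨ν k, ζ, Submodule.mem_iSup_of_mem k (Submodule.mem_iSup_of_mem (le_refl (ν k)) hζ), rfl⟩)

end Generated

theorem statement7_general {H : Type*} [NormedAddCommGroup H] [InnerProductSpace ℂ H]
    {E : Type*} [NormedAddCommGroup E] [InnerProductSpace ℂ E] [FiniteDimensional ℂ E]
    (d s : ℕ) (D : DShift d E H)
    (ν : Fin s → (Fin d → ℕ))
    (Esub : Fin s → Submodule ℂ E)
    (M : Submodule ℂ H) (hMinv : IsInvariant D M)
    (hMgen : {x : H | ∃ k ζ, ζ ∈ Esub k ∧ x = D.mono (ν k) ζ} ⊆ (M : Set H) ∧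
      ∀ N : Submodule ℂ H, IsClosed (N : Set H) → IsInvariant D N →
        {x : H | ∃ k ζ, ζ ∈ Esub k ∧ x = D.mono (ν k) ζ} ⊆ (N : Set H) → M ≤ N)
    (Γ : (Fin d → ℂ) → (H →L[ℂ] H))
    (hΓ : ∀ (l : Fin d → ℂ), (∀ i, ‖l i‖ = 1) → ∀ (m : Fin d → ℕ) (ζ : E),
      Γ l (D.mono m ζ) = (∏ i, l i ^ m i) • D.mono m ζ)
    (n : Fin d → ℤ) :
    (¬ (∀ i, 0 ≤ n i) →
        {ξ : H | ξ ∈ M ∧ ∀ (l : Fin d → ℂ), (∀ i, ‖l i‖ = 1) →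
          Γ l ξ = (∏ i, l i ^ n i) • ξ} = {0}) ∧
      ((∀ i, 0 ≤ n i) →
        {ξ : H | ξ ∈ M ∧ ∀ (l : Fin d → ℂ), (∀ i, ‖l i‖ = 1) →
          Γ l ξ = (∏ i, l i ^ n i) • ξ} =
        {x : H | ∃ ζ ∈ (⨆ k ∈ {k : Fin s | ∀ i, (ν k i : ℤ) ≤ n i}, Esub k),
          x = D.mono (fun i => (n i).toNat) ζ}) := by
  obtain ⟨hgen, hmin⟩ := hMgen
  refine ⟨fun hn => Set.eq_singleton_iff_unique_mem.2 ⟨⟨M.zero_mem, fun l _ => by simp⟩, ?_⟩,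
    fun hn => ?_⟩
  · exact fun ξ ⟨_, hξ⟩ => IsSpectral.eq_zero_of_not_nonneg hΓ hξ hn
  lift n to Fin d → ℕ using hn
  simp only [Int.toNat_natCast, Nat.cast_le]
  ext ξ
  constructor
  · rintro ⟨hξM, hξ⟩
    obtain ⟨ζ, rfl⟩ := IsSpectral.exists_eq_mono hΓ hξ
    exact ⟨ζ, D.mem_of_mono_mem_monomialClosure (le_monomialClosure_coeffSpace hmin hξM), rfl⟩
  · rintro ⟨ζ, hζ, rfl⟩
    exact ⟨hMinv.mono_mem_of_mem_coeffSpace hgen hζ, IsGaugeAction.isSpectral_mono hΓ n ζ⟩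

/-- Let `M ⊆ H²(ℂ^d) ⊗ E` be the closed invariant subspace generated by
`z^{ν₁} ⊗ E₁, …, z^{ν_s} ⊗ E_s` (with distinct multi-indices `ν_k` and subspaces
`E_k ⊆ E`).  For `n ∈ ℤ^d` let `M(n)` be the spectral subspace
`{ξ ∈ M : Γ(λ)ξ = λ^n ξ for all λ ∈ 𝕋^d}` and let
`E(n) = Σ {E_k : ν_k ≤ n}`.  Then `M(n) = 0` unless `n ≥ 0`, and for `n ≥ 0` one has
`M(n) = z^n ⊗ E(n)`. -/
theorem statement7 {H : Type*} [NormedAddCommGroup H] [InnerProductSpace ℂ H]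
    {E : Type*} [NormedAddCommGroup E] [InnerProductSpace ℂ E] [FiniteDimensional ℂ E]
    (d s : ℕ) (D : DShift d E H)
    (ν : Fin s → (Fin d → ℕ)) (hν : Function.Injective ν)
    (Esub : Fin s → Submodule ℂ E)
    (M : Submodule ℂ H) (hMcl : IsClosed (M : Set H)) (hMinv : IsInvariant D M)
    (hMgen : {x : H | ∃ k ζ, ζ ∈ Esub k ∧ x = D.mono (ν k) ζ} ⊆ (M : Set H) ∧
      ∀ N : Submodule ℂ H, IsClosed (N : Set H) → IsInvariant D N →
        {x : H | ∃ k ζ, ζ ∈ Esub k ∧ x = D.mono (ν k) ζ} ⊆ (N : Set H) → M ≤ N)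
    (Γ : (Fin d → ℂ) → (H →L[ℂ] H))
    (hΓ : ∀ (l : Fin d → ℂ), (∀ i, ‖l i‖ = 1) → ∀ (m : Fin d → ℕ) (ζ : E),
      Γ l (D.mono m ζ) = (∏ i, l i ^ m i) • D.mono m ζ)
    (n : Fin d → ℤ) :
    (¬ (∀ i, 0 ≤ n i) →
        {ξ : H | ξ ∈ M ∧ ∀ (l : Fin d → ℂ), (∀ i, ‖l i‖ = 1) →
          Γ l ξ = (∏ i, l i ^ n i) • ξ} = {0}) ∧
      ((∀ i, 0 ≤ n i) →
        {ξ : H | ξ ∈ M ∧ ∀ (l : Fin d → ℂ), (∀ i, ‖l i‖ = 1) →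
          Γ l ξ = (∏ i, l i ^ n i) • ξ} =
        {x : H | ∃ ζ ∈ (⨆ k ∈ {k : Fin s | ∀ i, (ν k i : ℤ) ≤ n i}, Esub k),
          x = D.mono (fun i => (n i).toNat) ζ}) :=
  statement7_general d s D ν Esub M hMinv hMgen Γ hΓ n

end Arveson
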